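/- Let (A, L) be a Lipschitz pair and (φ_n) a sequence of states of A with mk_L(φ_n, φ) → 0 for some state φ. Then φ_n → φ in the weak* topology, i.e. φ_n(a) → φ(a) for every a ∈ A. -/

import Mathlib

open scoped ENNReal

section common
variable {A : Type*} [NormedRing A] [StarRing A] [NormedAlgebra ℂ A]

def IsState (φ : A →ₗ[ℂ] ℂ) : Prop :=
  φ 1 = 1 ∧ ∀ a : A, ∃ r : ℝ, 0 ≤ r ∧ φ (star a * a) = r

noncomputable def mkDist (L : A → ℝ≥0∞) (φ ψ : A →ₗ[ℂ] ℂ) : ℝ≥0∞ :=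
  ⨆ a ∈ {a : A | IsSelfAdjoint a ∧ L a ≤ 1}, edist (φ a) (ψ a)
end common

/-! If `L b ≤ t`, then `t⁻¹ • b` lies in the unit ball of `L`, so `‖φ b - ψ b‖ ≤ t · mk_L(φ, ψ)`;
hence `mk_L`-convergence gives convergence at every self-adjoint `b` with `L b < ∞`.
Since `‖a‖ - a = b⋆b` for self-adjoint `a`, states satisfy `‖φ a‖ ≤ ‖a‖` there, and so, via
`a = Re a + i Im a`, they form a uniformly `2`-Lipschitz family on `A`. For an equicontinuous
family the set of points of convergence is closed, so density of `dom L` finishes the proof. -/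

open Filter Topology
open scoped NNReal

theorem IsSelfAdjoint.exists_algebraMap_norm_sub_eq_star_mul_self {A : Type*} [CStarAlgebra A]
    {a : A} (ha : IsSelfAdjoint a) : ∃ b : A, algebraMap ℝ A ‖a‖ - a = star b * b := by
  let _ := CStarAlgebra.spectralOrder A
  have := CStarAlgebra.spectralOrderedRing A
  exact CStarAlgebra.nonneg_iff_eq_star_mul_self.mp (sub_nonneg.mpr ha.le_algebraMap_norm_self)

namespace IsState

variable {A : Type*} [CStarAlgebra A] {φ : A →ₗ[ℂ] ℂ}

theorem apply_algebraMap (hφ : IsState φ) (r : ℝ) : φ (algebraMap ℝ A r) = r := by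
  simp [Algebra.algebraMap_eq_smul_one, hφ.1]

theorem exists_apply_eq_norm_sub (hφ : IsState φ) {a : A} (ha : IsSelfAdjoint a) :
    ∃ r : ℝ, 0 ≤ r ∧ φ a = ‖a‖ - r := by
  obtain ⟨b, hb⟩ := ha.exists_algebraMap_norm_sub_eq_star_mul_self
  obtain ⟨r, hr, hφb⟩ := hφ.2 b
  refine ⟨r, hr, ?_⟩
  rw [← hb, map_sub, hφ.apply_algebraMap] at hφb
  linear_combination -hφb

theorem norm_apply_le (hφ : IsState φ) {a : A} (ha : IsSelfAdjoint a) : ‖φ a‖ ≤ ‖a‖ := by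
  obtain ⟨r, hr, h⟩ := hφ.exists_apply_eq_norm_sub ha
  obtain ⟨s, hs, h'⟩ := hφ.exists_apply_eq_norm_sub ha.neg
  rw [map_neg, norm_neg] at h'
  have hrs : r + s = 2 * ‖a‖ := by
    exact_mod_cast (by linear_combination h + h' : (r + s : ℂ) = 2 * ‖a‖)
  rw [h, ← Complex.ofReal_sub, Complex.norm_real, Real.norm_eq_abs, abs_le]
  constructor <;> linarith

theorem norm_apply_le_two_mul (hφ : IsState φ) (a : A) : ‖φ a‖ ≤ 2 * ‖a‖ :=
  calc ‖φ a‖ = ‖φ (realPart a) + Complex.I * φ (imaginaryPart a)‖ := by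
        rw [← smul_eq_mul, ← map_smul, ← map_add, realPart_add_I_smul_imaginaryPart]
    _ ≤ ‖realPart a‖ + ‖imaginaryPart a‖ := by
        grw [norm_add_le, norm_mul, Complex.norm_I, one_mul]
        exact add_le_add (hφ.norm_apply_le (realPart a).2) (hφ.norm_apply_le (imaginaryPart a).2)
    _ ≤ 2 * ‖a‖ := by linarith [realPart.norm_le a, imaginaryPart.norm_le a]

theorem lipschitzWith (hφ : IsState φ) : LipschitzWith 2 φ := by
  simpa using AddMonoidHomClass.lipschitz_of_bound φ 2 hφ.norm_apply_le_two_mul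

end IsState

theorem IsState.tendsto_apply_of_forall_mem_closure {A ι : Type*} [CStarAlgebra A]
    {l : Filter ι} {φ : ι → A →ₗ[ℂ] ℂ} {ψ : A →ₗ[ℂ] ℂ} (hφ : ∀ i, IsState (φ i))
    (hψ : IsState ψ) {D : Set A} (hD : ∀ a : A, IsSelfAdjoint a → a ∈ closure D)
    (hconv : ∀ b ∈ D, Tendsto (fun i => φ i b) l (𝓝 (ψ b))) (a : A) :
    Tendsto (fun i => φ i a) l (𝓝 (ψ a)) := by
  have hclosed : IsClosed {a : A | Tendsto (fun i => φ i a) l (𝓝 (ψ a))} :=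
    (LipschitzWith.uniformEquicontinuous (fun i => ⇑(φ i)) 2 fun i => (hφ i).lipschitzWith)
      |>.equicontinuous.isClosed_setOfPred_tendsto hψ.lipschitzWith.continuous
  have hsa : ∀ a : A, IsSelfAdjoint a → Tendsto (fun i => φ i a) l (𝓝 (ψ a)) :=
    fun a ha => hclosed.closure_subset_iff.mpr hconv (hD a ha)
  rw [← realPart_add_I_smul_imaginaryPart a]
  simp only [map_add, map_smul]
  exact (hsa _ (realPart a).2).add ((hsa _ (imaginaryPart a).2).const_smul Complex.I)

section LipschitzPair

variable {A : Type*} [NormedRing A] [StarRing A] [NormedAlgebra ℂ A] {L : A → ℝ≥0∞}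

theorem edist_le_mkDist {φ ψ : A →ₗ[ℂ] ℂ} {a : A} (ha : IsSelfAdjoint a) (hLa : L a ≤ 1) :
    edist (φ a) (ψ a) ≤ mkDist L φ ψ :=
  le_iSup₂_of_le (f := fun a _ => edist (φ a) (ψ a)) a ⟨ha, hLa⟩ le_rfl

theorem edist_le_mul_mkDist [StarModule ℂ A]
    (hsmul : ∀ (r : ℝ) (a : A), IsSelfAdjoint a → L ((r : ℂ) • a) = (‖r‖₊ : ℝ≥0∞) * L a)
    {φ ψ : A →ₗ[ℂ] ℂ} {b : A} (hb : IsSelfAdjoint b) {t : ℝ≥0} (ht : t ≠ 0) (hLb : L b ≤ t) :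
    edist (φ b) (ψ b) ≤ t * mkDist L φ ψ := by
  obtain ⟨b', hb'⟩ : ∃ b', b' = (((t⁻¹ : ℝ≥0) : ℝ) : ℂ) • b := ⟨_, rfl⟩
  have hb'sa : IsSelfAdjoint b' := hb' ▸ IsSelfAdjoint.smul (Complex.conj_ofReal _) hb
  have hLb' : L b' ≤ 1 :=
    calc L b' = (t⁻¹ : ℝ≥0) * L b := by rw [hb', hsmul _ _ hb, NNReal.nnnorm_eq]
      _ ≤ (t⁻¹ : ℝ≥0) * t := by gcongr
      _ = 1 := by rw [← ENNReal.coe_mul, inv_mul_cancel₀ ht, ENNReal.coe_one]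
  have hbb' : b = ((t : ℝ) : ℂ) • b' := by simp [hb', smul_smul, ht]
  calc edist (φ b) (ψ b) = t * edist (φ b') (ψ b') := by
        rw [hbb', map_smul, map_smul, edist_smul₀, Complex.nnnorm_real, NNReal.nnnorm_eq,
          ENNReal.smul_def, smul_eq_mul]
    _ ≤ t * mkDist L φ ψ := by gcongr; exact edist_le_mkDist hb'sa hLb'

theorem tendsto_apply_of_tendsto_mkDist [StarModule ℂ A]
    (hsmul : ∀ (r : ℝ) (a : A), IsSelfAdjoint a → L ((r : ℂ) • a) = (‖r‖₊ : ℝ≥0∞) * L a)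
    {ι : Type*} {l : Filter ι} {φ : ι → A →ₗ[ℂ] ℂ} {ψ : A →ₗ[ℂ] ℂ}
    (hconv : Tendsto (fun i => mkDist L (φ i) ψ) l (𝓝 0)) {b : A} (hb : IsSelfAdjoint b)
    (hLb : L b ≠ ⊤) : Tendsto (fun i => φ i b) l (𝓝 (ψ b)) := by
  set t : ℝ≥0 := (L b).toNNReal + 1
  have hLbt : L b ≤ t := by
    rw [ENNReal.coe_add, ENNReal.coe_toNNReal hLb]
    exact le_self_add
  have hbound : Tendsto (fun i => (t : ℝ≥0∞) * mkDist L (φ i) ψ) l (𝓝 0) := by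
    simpa using ENNReal.Tendsto.const_mul hconv (Or.inr ENNReal.coe_ne_top)
  rw [tendsto_iff_edist_tendsto_0]
  exact tendsto_of_tendsto_of_tendsto_of_le_of_le tendsto_const_nhds hbound (fun _ => zero_le)
    fun _ => edist_le_mul_mkDist hsmul hb (by positivity) hLbt

end LipschitzPair

theorem stmt15_general {A : Type*} [NormedRing A] [StarRing A] [CStarRing A]
    [NormedAlgebra ℂ A] [CompleteSpace A] [StarModule ℂ A]
    (L : A → ℝ≥0∞)
    -- Lipschitz pair data:
    (hdense : ∀ a : A, IsSelfAdjoint a →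
      a ∈ closure {b : A | IsSelfAdjoint b ∧ L b ≠ ⊤})
    (hsmul : ∀ (r : ℝ) (a : A), IsSelfAdjoint a →
      L (((r : ℂ)) • a) = (‖r‖₊ : ℝ≥0∞) * L a)
    (φ : ℕ → A →ₗ[ℂ] ℂ) (hφ : ∀ n, IsState (φ n))
    (ψ : A →ₗ[ℂ] ℂ) (hψ : IsState ψ)
    (hconv : Filter.Tendsto (fun n => mkDist L (φ n) ψ) Filter.atTop (nhds 0)) :
    ∀ a : A, Filter.Tendsto (fun n => φ n a) Filter.atTop (nhds (ψ a)) := by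
  let _ : CStarAlgebra A := {}
  exact IsState.tendsto_apply_of_forall_mem_closure hφ hψ hdense
    fun b hb => tendsto_apply_of_tendsto_mkDist hsmul hconv hb.1 hb.2

/-- Convergence of states in the Monge–Kantorovich metric of a Lipschitz pair implies
weak* convergence. -/
theorem stmt15 {A : Type*} [NormedRing A] [StarRing A] [CStarRing A]
    [NormedAlgebra ℂ A] [CompleteSpace A] [StarModule ℂ A]
    (L : A → ℝ≥0∞)
    -- Lipschitz pair data:
    (hdense : ∀ a : A, IsSelfAdjoint a →
      a ∈ closure {b : A | IsSelfAdjoint b ∧ L b ≠ ⊤})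
    (hsub : ∀ a b : A, IsSelfAdjoint a → IsSelfAdjoint b → L (a + b) ≤ L a + L b)
    (hsmul : ∀ (r : ℝ) (a : A), IsSelfAdjoint a →
      L (((r : ℂ)) • a) = (‖r‖₊ : ℝ≥0∞) * L a)
    (hker : ∀ a : A, IsSelfAdjoint a → (L a = 0 ↔ ∃ r : ℝ, a = ((r : ℂ)) • 1))
    (φ : ℕ → A →ₗ[ℂ] ℂ) (hφ : ∀ n, IsState (φ n))
    (ψ : A →ₗ[ℂ] ℂ) (hψ : IsState ψ)
    (hconv : Filter.Tendsto (fun n => mkDist L (φ n) ψ) Filter.atTop (nhds 0)) :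
    ∀ a : A, Filter.Tendsto (fun n => φ n a) Filter.atTop (nhds (ψ a)) :=
  stmt15_general L hdense hsmul φ hφ ψ hψ hconv
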